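/- arXiv:1504.01520 — 7 statements merged into one kernel-verified Lean document; each statement's English description precedes it below -/
import Mathlib

section
/- Let P and Q be finite nonempty posets, and assume P has a unique maximal element or a unique minimal element. Then: (1) for every minimal prime ideal 𝔭 of L(P,Q) with height 𝔭 ≤ |Q|, there exists an isotone map ψ ∈ Hom(Q,P) such that 𝔭 = 𝔭_ψ; and (2) the assignment ψ ↦ 𝔭_ψ is injective, i.e., 𝔭_ψ ≠ 𝔭_ψ' for distinct ψ, ψ' ∈ Hom(Q,P). -/
open MvPolynomial

/-- The ideal `L(P,Q)` generated by the monomials `u_φ = ∏_{p∈P} x_{p,φ(p)}`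
over all isotone maps `φ : P → Q`. -/
noncomputable def isoL (P Q K : Type*) [PartialOrder P] [PartialOrder Q] [Fintype P]
    [Field K] : Ideal (MvPolynomial (P × Q) K) :=
  Ideal.span { u | ∃ φ : P →o Q, u = ∏ p : P, X (p, φ p) }

/-- The Alexander dual `L(P,Q)^∨ = ⋂_{φ} (x_{p,φ(p)} : p ∈ P)`. -/
noncomputable def isoDual (P Q K : Type*) [PartialOrder P] [PartialOrder Q]
    [Field K] : Ideal (MvPolynomial (P × Q) K) :=
  ⨅ φ : P →o Q, Ideal.span { u | ∃ p : P, u = X (p, φ p) }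

/-- The ideal `L(Q,P)^τ ⊆ K[x_{pq}]` generated by `∏_{q∈Q} x_{ψ(q),q}` for `ψ ∈ Hom(Q,P)`. -/
noncomputable def isoTau (P Q K : Type*) [PartialOrder P] [PartialOrder Q] [Fintype Q]
    [Field K] : Ideal (MvPolynomial (P × Q) K) :=
  Ideal.span { u | ∃ ψ : Q →o P, u = ∏ q : Q, X (ψ q, q) }

/-- The prime ideal `𝔭_ψ = (x_{ψ(q),q} : q ∈ Q)`. -/
noncomputable def pPsi (P Q K : Type*) [PartialOrder P] [PartialOrder Q]
    [Field K] (ψ : Q →o P) : Ideal (MvPolynomial (P × Q) K) :=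
  Ideal.span { u | ∃ q : Q, u = X (ψ q, q) }

/-- The height of an ideal: the infimum of the heights (in the prime spectrum)
of the prime ideals containing it. -/
noncomputable def idealHeight {R : Type*} [CommRing R] (I : Ideal R) : ℕ∞ :=
  ⨅ J : {J : PrimeSpectrum R // I ≤ J.asIdeal}, Order.height J.1

/-- `P` is connected: any two elements are linked by a chain of comparabilities. -/
def PosetConnected (P : Type*) [PartialOrder P] : Prop :=
  ∀ a b : P, Relation.ReflTransGen (fun x y : P => x ≤ y ∨ y ≤ x) a b

/-- `P` is rooted: two incomparable elements have no common strict upper bound. -/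
def Rooted (P : Type*) [PartialOrder P] : Prop :=
  ∀ p₁ p₂ p : P, ¬ p₁ ≤ p₂ → ¬ p₂ ≤ p₁ → ¬ (p₁ < p ∧ p₂ < p)

/-- `P` is co-rooted: two incomparable elements have no common strict lower bound. -/
def CoRooted (P : Type*) [PartialOrder P] : Prop :=
  ∀ p₁ p₂ p : P, ¬ p₁ ≤ p₂ → ¬ p₂ ≤ p₁ → ¬ (p < p₁ ∧ p < p₂)

/-- `P` is a chain, i.e. totally ordered. -/
def IsChainPoset (P : Type*) [PartialOrder P] : Prop :=
  ∀ a b : P, a ≤ b ∨ b ≤ a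

section AuxLemmas

open MvPolynomial

variable {σ K : Type*} [Field K]

open Classical in
private lemma sub_killVars_mem (s : Set σ) (p : MvPolynomial σ K) :
    p - aeval (fun i => if i ∈ s then 0 else X i) p
      ∈ Ideal.span (X '' s : Set (MvPolynomial σ K)) := by
  induction p using MvPolynomial.induction_on with
  | C a => simp
  | add p q hp hq =>
      rw [map_add]
      have h : p + q - (aeval (fun i => if i ∈ s then 0 else X i) p
          + aeval (fun i => if i ∈ s then 0 else X i) q)
          = (p - aeval (fun i => if i ∈ s then 0 else X i) p)
            + (q - aeval (fun i => if i ∈ s then 0 else X i) q) := by ring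
      rw [h]; exact Ideal.add_mem _ hp hq
  | mul_X p i hp =>
      rw [map_mul, aeval_X]
      by_cases his : i ∈ s
      · rw [if_pos his, mul_zero, sub_zero]
        exact Ideal.mul_mem_left _ _ (Ideal.subset_span ⟨i, his, rfl⟩)
      · rw [if_neg his]
        have h : p * X i - aeval (fun i => if i ∈ s then 0 else X i) p * X i
            = (p - aeval (fun i => if i ∈ s then 0 else X i) p) * X i := by ring
        rw [h]; exact Ideal.mul_mem_right _ _ hp

open Classical in
private lemma span_X_eq_ker (s : Set σ) :
    Ideal.span (X '' s : Set (MvPolynomial σ K))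
      = RingHom.ker (aeval (fun i => if i ∈ s then (0 : MvPolynomial σ K) else X i)) := by
  apply le_antisymm
  · rw [Ideal.span_le]
    rintro _ ⟨i, his, rfl⟩
    simp [RingHom.mem_ker, his]
  · intro p hp
    have h := sub_killVars_mem s p
    rwa [RingHom.mem_ker.mp hp, sub_zero] at h

private lemma span_X_isPrime (s : Set σ) :
    (Ideal.span (X '' s : Set (MvPolynomial σ K))).IsPrime := by
  classical
  rw [span_X_eq_ker]
  exact RingHom.ker_isPrime _

private lemma X_mem_span_X (s : Set σ) (i : σ) :
    (X i : MvPolynomial σ K) ∈ Ideal.span (X '' s : Set (MvPolynomial σ K)) ↔ i ∈ s := by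
  constructor
  · intro h
    obtain ⟨j, hj, hji⟩ := mem_ideal_span_X_image.mp h (Finsupp.single i 1)
      (by rw [support_X]; exact Finset.mem_singleton_self _)
    classical
    rcases eq_or_ne i j with rfl | hij
    · exact hj
    · rw [Finsupp.single_apply, if_neg hij] at hji
      exact absurd rfl hji
  · exact fun h => Ideal.subset_span ⟨i, h, rfl⟩

end AuxLemmas

private lemma card_le_height {σ K : Type*} [Field K] [Finite σ] (V : Set σ) [Fintype V]
    (J : PrimeSpectrum (MvPolynomial σ K))
    (hJ : Ideal.span (X '' V : Set (MvPolynomial σ K)) ≤ J.asIdeal) :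
    (Fintype.card V : ℕ∞) ≤ Order.height J := by
  classical
  set n := Fintype.card V with hn
  let e : Fin n ≃ V := (Fintype.equivFin V).symm
  let W : Fin (n + 1) → Set σ := fun k => Subtype.val '' (e '' {j : Fin n | (j : ℕ) < (k : ℕ)})
  let f : Fin (n + 1) → PrimeSpectrum (MvPolynomial σ K) :=
    fun k => ⟨Ideal.span (X '' W k), span_X_isPrime _⟩
  have hWV : ∀ k, W k ⊆ V := by rintro k _ ⟨⟨v, hv⟩, _, rfl⟩; exact hv
  have hstep : ∀ i : Fin n, f i.castSucc < f i.succ := by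
    intro i
    rw [← PrimeSpectrum.asIdeal_lt_asIdeal]
    refine lt_of_le_of_ne (Ideal.span_mono (Set.image_mono ?_)) ?_
    · refine Set.image_mono (Set.image_mono ?_)
      intro j hj
      simp only [Set.mem_setOf_eq, Fin.coe_castSucc] at hj ⊢
      rw [Fin.val_succ]
      omega
    · intro heq
      have hmem : (X ((e i : V) : σ) : MvPolynomial σ K)
          ∈ Ideal.span (X '' W i.succ : Set (MvPolynomial σ K)) := by
        refine Ideal.subset_span ⟨_, ⟨e i, ⟨i, ?_, rfl⟩, rfl⟩, rfl⟩
        simp [Fin.val_succ]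
      have heq' : Ideal.span (X '' W i.castSucc : Set (MvPolynomial σ K))
          = Ideal.span (X '' W i.succ) := heq
      rw [← heq', X_mem_span_X] at hmem
      obtain ⟨v, ⟨j, hj, rfl⟩, hval⟩ := hmem
      have : j = i := e.injective (Subtype.val_injective hval)
      subst this
      simp only [Set.mem_setOf_eq, Fin.coe_castSucc] at hj
      omega
  let p : LTSeries (PrimeSpectrum (MvPolynomial σ K)) := ⟨n, f, hstep⟩
  have hlast : p.last ≤ J := by
    rw [← PrimeSpectrum.asIdeal_le_asIdeal]
    refine le_trans ?_ hJ
    exact Ideal.span_mono (Set.image_mono (hWV _))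
  have := Order.length_le_height hlast
  simpa using this

private lemma pPsi_eq (P Q K : Type*) [PartialOrder P] [PartialOrder Q] [Field K]
    (ψ : Q →o P) :
    pPsi P Q K ψ = Ideal.span (X '' (Set.range fun q => ((ψ q : P), q)) :
      Set (MvPolynomial (P × Q) K)) := by
  unfold pPsi
  congr 1
  ext u
  constructor
  · rintro ⟨q, rfl⟩; exact ⟨(ψ q, q), ⟨q, rfl⟩, rfl⟩
  · rintro ⟨_, ⟨q, rfl⟩, rfl⟩; exact ⟨q, rfl⟩

/-- If `P` has a unique maximal or a unique minimal element, then every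
minimal prime `𝔭` of `L(P,Q)` of height at most `|Q|` is of the form `𝔭_ψ` for some
isotone `ψ : Q → P`, and `ψ ↦ 𝔭_ψ` is injective. -/
theorem stmt_0 (P Q K : Type*) [PartialOrder P] [PartialOrder Q]
    [Fintype P] [Fintype Q] [Nonempty P] [Nonempty Q] [Field K]
    (hP : (∃! m : P, ∀ x : P, ¬ m < x) ∨ (∃! m : P, ∀ x : P, ¬ x < m)) :
    (∀ 𝔭 ∈ (isoL P Q K).minimalPrimes,
        idealHeight 𝔭 ≤ (Fintype.card Q : ℕ∞) → ∃ ψ : Q →o P, 𝔭 = pPsi P Q K ψ) ∧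
    Function.Injective (pPsi P Q K) := by
  classical
  constructor
  · intro 𝔭 h𝔭 hht
    obtain ⟨⟨hpr, hle⟩, hmin⟩ := h𝔭
    haveI := hpr
    set V : Set (P × Q) := {v | X v ∈ 𝔭} with hVdef
    haveI : Fintype V := Fintype.ofFinite _
    have hsub : Ideal.span (X '' V : Set (MvPolynomial (P × Q) K)) ≤ 𝔭 := by
      rw [Ideal.span_le]; rintro _ ⟨v, hv, rfl⟩; exact hv
    have hLsub : isoL P Q K ≤ Ideal.span (X '' V : Set (MvPolynomial (P × Q) K)) := by
      rw [isoL, Ideal.span_le]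
      rintro _ ⟨φ, rfl⟩
      have hu : (∏ p : P, X (p, φ p) : MvPolynomial (P × Q) K) ∈ 𝔭 :=
        hle (Ideal.subset_span ⟨φ, rfl⟩)
      obtain ⟨p, -, hp⟩ := Ideal.IsPrime.prod_mem_iff.mp hu
      obtain ⟨c, hc⟩ := Finset.dvd_prod_of_mem (fun p => (X (p, φ p) : MvPolynomial (P × Q) K))
        (Finset.mem_univ p)
      rw [hc]
      exact Ideal.mul_mem_right _ _ (Ideal.subset_span ⟨(p, φ p), hp, rfl⟩)
    have hVspan : Ideal.span (X '' V : Set (MvPolynomial (P × Q) K)) = 𝔭 :=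
      le_antisymm hsub (hmin ⟨span_X_isPrime V, hLsub⟩ hsub)
    have hcard : Fintype.card V ≤ Fintype.card Q := by
      have h1 : (Fintype.card V : ℕ∞) ≤ idealHeight 𝔭 := by
        rw [idealHeight]
        refine le_iInf fun J => card_le_height V J.1 ?_
        rw [hVspan]; exact J.2
      exact_mod_cast h1.trans hht
    have hcol : ∀ q : Q, ∃ p : P, (p, q) ∈ V := by
      intro q
      have hu : (∏ p : P, X (p, ((⟨fun _ => q, fun _ _ _ => le_refl q⟩ : P →o Q)) p)
          : MvPolynomial (P × Q) K) ∈ 𝔭 :=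
        hle (Ideal.subset_span ⟨⟨fun _ => q, fun _ _ _ => le_refl q⟩, rfl⟩)
      obtain ⟨p, -, hp⟩ := Ideal.IsPrime.prod_mem_iff.mp hu
      exact ⟨p, hp⟩
    let snd : V → Q := fun v => v.1.2
    have hsurj : Function.Surjective snd := fun q => by
      obtain ⟨p, hp⟩ := hcol q; exact ⟨⟨(p, q), hp⟩, rfl⟩
    have hbij : Function.Bijective snd :=
      (Fintype.bijective_iff_surjective_and_card snd).mpr
        ⟨hsurj, le_antisymm hcard (Fintype.card_le_of_surjective snd hsurj)⟩
    let e2 : V ≃ Q := Equiv.ofBijective snd hbij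
    let ψf : Q → P := fun q => (e2.symm q).1.1
    have hmem : ∀ q, (ψf q, q) ∈ V := by
      intro q
      have h2 : (e2.symm q).1.2 = q := e2.apply_symm_apply q
      have h3 : ((e2.symm q).1) = (ψf q, q) := Prod.ext rfl h2
      exact h3 ▸ (e2.symm q).2
    have huniq : ∀ p q, (p, q) ∈ V → p = ψf q := by
      intro p q hpq
      have h2 : e2 ⟨(p, q), hpq⟩ = q := rfl
      have h4 : e2.symm q = ⟨(p, q), hpq⟩ := e2.symm_apply_eq.mpr h2.symm
      simp only [ψf, h4]
    have hiso : Monotone ψf := by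
      intro q₀ q₁ hq
      by_contra hnot
      set φf : P → Q := fun p => if ψf q₀ ≤ p then q₁ else q₀ with hφf
      have hφ : Monotone φf := by
        intro a b hab
        simp only [φf]
        split_ifs with h1 h2
        · exact le_refl _
        · exact absurd (h1.trans hab) h2
        · exact hq
        · exact le_refl _
      have hu : (∏ p : P, X (p, ((⟨φf, hφ⟩ : P →o Q)) p) : MvPolynomial (P × Q) K) ∈ 𝔭 :=
        hle (Ideal.subset_span ⟨⟨φf, hφ⟩, rfl⟩)
      obtain ⟨p, -, hp⟩ := Ideal.IsPrime.prod_mem_iff.mp hu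
      have hpV : (p, φf p) ∈ V := hp
      have hpe := huniq p (φf p) hpV
      by_cases h5 : ψf q₀ ≤ p
      · rw [show φf p = q₁ from if_pos h5] at hpe
        exact hnot (by rw [← hpe]; exact h5)
      · rw [show φf p = q₀ from if_neg h5] at hpe
        exact h5 hpe.ge
    refine ⟨⟨ψf, hiso⟩, ?_⟩
    have hVrange : (Set.range fun q => ((ψf q : P), q)) = V := by
      ext v
      constructor
      · rintro ⟨q, rfl⟩; exact hmem q
      · intro hv
        exact ⟨v.2, Prod.ext (huniq v.1 v.2 (by rwa [Prod.mk.eta])).symm rfl⟩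
    rw [pPsi_eq, ← hVspan]
    congr 1
    rw [show ((⟨ψf, hiso⟩ : Q →o P) : Q → P) = ψf from rfl, hVrange]
  · intro ψ ψ' h
    apply OrderHom.ext
    funext q
    have h1 : (X (ψ q, q) : MvPolynomial (P × Q) K) ∈ pPsi P Q K ψ' := by
      rw [← h]; exact Ideal.subset_span ⟨q, rfl⟩
    rw [pPsi_eq, X_mem_span_X] at h1
    obtain ⟨q', hq'⟩ := h1
    have h3 : q' = q := congrArg Prod.snd hq'
    subst h3
    exact ((Prod.ext_iff.mp hq').1).symm
end

section
/- Let P and Q be finite nonempty posets. If the duality condition L(P,Q)^∨ = L(Q,P)^τ holds, then P is connected or Q is connected. -/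
open MvPolynomial

/-- If `L(P,Q)^∨ = L(Q,P)^τ`, then `P` or `Q` is connected. -/
theorem stmt_4 (P Q K : Type*) [PartialOrder P] [PartialOrder Q]
    [Fintype P] [Fintype Q] [Nonempty P] [Nonempty Q] [Field K]
    (h : isoDual P Q K = isoTau P Q K) :
    PosetConnected P ∨ PosetConnected Q := by
  classical
  by_contra hcon
  push_neg at hcon
  obtain ⟨hP, hQ⟩ := hcon
  simp only [PosetConnected, not_forall] at hP hQ
  obtain ⟨p₁, p₂, hp⟩ := hP
  obtain ⟨q₁, q₂, hq⟩ := hQ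
  -- the isotone map φ : P → Q, constant on the component of p₁ and its complement
  set rP : P → P → Prop := fun x y : P => x ≤ y ∨ y ≤ x with hrP
  set rQ : Q → Q → Prop := fun x y : Q => x ≤ y ∨ y ≤ x with hrQ
  have φmono : Monotone (fun p : P => if Relation.ReflTransGen rP p₁ p then q₁ else q₂) := by
    intro x y hxy
    have hiff : Relation.ReflTransGen rP p₁ x ↔ Relation.ReflTransGen rP p₁ y :=
      ⟨fun h' => h'.tail (Or.inl hxy), fun h' => h'.tail (Or.inr hxy)⟩
    simp only [hiff]
    exact le_rfl
  have ψmono : Monotone (fun q : Q => if Relation.ReflTransGen rQ q₁ q then p₂ else p₁) := by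
    intro x y hxy
    have hiff : Relation.ReflTransGen rQ q₁ x ↔ Relation.ReflTransGen rQ q₁ y :=
      ⟨fun h' => h'.tail (Or.inl hxy), fun h' => h'.tail (Or.inr hxy)⟩
    simp only [hiff]
    exact le_rfl
  set φ : P →o Q := ⟨_, φmono⟩ with hφ
  set ψ : Q →o P := ⟨_, ψmono⟩ with hψ
  -- key disjointness: no pair (ψ q, q) is of the form (p, φ p)
  have key : ∀ q : Q, ¬ ∃ p : P, ((ψ q, q) : P × Q) = (p, φ p) := by
    rintro q ⟨p, hpq⟩
    simp only [Prod.mk.injEq] at hpq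
    obtain ⟨h1, h2⟩ := hpq
    by_cases hc : Relation.ReflTransGen rQ q₁ q
    · have hψq : ψ q = p₂ := if_pos hc
      have hφp : φ p = q₂ := by
        rw [← h1, hψq]
        exact if_neg hp
      rw [hφp] at h2
      exact hq (h2 ▸ hc)
    · have hψq : ψ q = p₁ := if_neg hc
      have hφp : φ p = q₁ := by
        rw [← h1, hψq]
        exact if_pos Relation.ReflTransGen.refl
      rw [hφp] at h2
      exact hc (h2 ▸ Relation.ReflTransGen.refl)
  -- the monomial u_ψ lies in isoTau
  set m : MvPolynomial (P × Q) K := ∏ q : Q, X (ψ q, q) with hm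
  have hmTau : m ∈ isoTau P Q K := Ideal.subset_span ⟨ψ, rfl⟩
  have hmDual : m ∈ isoDual P Q K := h ▸ hmTau
  have hmφ : m ∈ Ideal.span { u : MvPolynomial (P × Q) K | ∃ p : P, u = X (p, φ p) } :=
    (Submodule.mem_iInf _).mp hmDual φ
  -- evaluation killing the variables x_{p, φ p}
  set v : P × Q → K := fun i => if ∃ p : P, i = (p, φ p) then 0 else 1 with hv
  have hker : Ideal.span { u : MvPolynomial (P × Q) K | ∃ p : P, u = X (p, φ p) }
      ≤ RingHom.ker (eval v) := by
    rw [Ideal.span_le]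
    rintro u ⟨p, rfl⟩
    simp only [SetLike.mem_coe, RingHom.mem_ker, eval_X, hv]
    exact if_pos ⟨p, rfl⟩
  have hev : eval v m = 1 := by
    rw [hm, map_prod]
    rw [Finset.prod_eq_one]
    intro q _
    rw [eval_X, hv]
    exact if_neg (key q)
  have : (0 : K) = 1 := by
    rw [← hev]
    exact (hker hmφ).symm
  exact zero_ne_one this
end

section
/- Let P and Q be finite nonempty posets, and assume P is connected, P is not a chain, and P is rooted. Then the duality condition L(P,Q)^∨ = L(Q,P)^τ holds if and only if Q is rooted. -/
/-!
Both ideals are squarefree monomial ideals, so the duality condition says: a set `T ⊆ P × Q`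
meets the graph of every isotone `φ : P → Q` iff it contains the transposed graph
`{(ψ q, q)}` of some isotone `ψ : Q → P`.

Containing a transposed graph implies meeting every graph as soon as each isotone self-map
`ψ ∘ φ` of `P` has a fixed point, which holds because a finite connected rooted poset has a
least element. Conversely, for rooted `P` and `Q` induct on `|Q|`: remove a maximal `q`, shrink
`T` so that any transposed graph inside the shrunk set extends to `q`, and use rootedness of `P`
to turn a graph avoiding the shrunk set into one avoiding `T`. If `Q` is not rooted, say
`q₁, q₂ < q` incomparable, and `p₁, p₂` are incomparable in `P`, then
`{(p₁, q₁), (p₂, q₂)} ∪ P × (Q ∖ {q₁, q₂})` meets every graph (an isotone map from the connected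
`P` into the antichain `{q₁, q₂}` is constant), but a transposed graph inside it would make
`ψ q` a common strict upper bound of `p₁` and `p₂`.
-/

open MvPolynomial

section Order

variable {P : Type*} [PartialOrder P]

theorem Rooted.le_total_of_le (hP : Rooted P) {a b c : P} (hac : a ≤ c) (hbc : b ≤ c) :
    a ≤ b ∨ b ≤ a := by
  by_contra! ⟨hab, hba⟩
  exact hP a b c hab hba
    ⟨hac.lt_of_ne (by rintro rfl; exact hba hbc), hbc.lt_of_ne (by rintro rfl; exact hab hac)⟩

theorem Rooted.subtype (hP : Rooted P) (s : P → Prop) : Rooted (Subtype s) :=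
  fun a b c hab hba habc => hP a b c hab hba habc

theorem Rooted.exists_isGreatest_lt [Finite P] (hP : Rooted P) {x q : P} (hxq : x < q) :
    ∃ b, IsGreatest {y | y < q} b := by
  obtain ⟨b, -, hb⟩ := (Set.toFinite {y | y < q}).exists_le_maximal hxq
  refine ⟨b, hb.prop, fun y hyq => ?_⟩
  rcases hP.le_total_of_le hyq.le hb.prop.le with hyb | hby
  · exact hyb
  · exact hb.le_of_ge hyq hby

theorem Rooted.exists_bot [Finite P] [Nonempty P] (hP : Rooted P) (hconn : PosetConnected P) :
    ∃ m : P, ∀ p, m ≤ p := by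
  obtain ⟨m, hm⟩ := Set.finite_univ.exists_minimal (Set.univ_nonempty (α := P))
  refine ⟨m, fun p => ?_⟩
  induction hconn m p with
  | refl => exact le_rfl
  | tail _ hbc hmb =>
    rcases hbc with hbc | hcb
    · exact hmb.trans hbc
    · rcases hP.le_total_of_le hmb hcb with hmc | hcm
      · exact hmc
      · exact hm.le_of_le trivial hcm

theorem OrderHom.exists_fixed_of_le_apply [Finite P] (f : P →o P) {x : P} (hx : x ≤ f x) :
    ∃ p, f p = p := by
  obtain ⟨m, -, hm⟩ := (Set.toFinite {y | y ≤ f y}).exists_le_maximal hx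
  exact ⟨m, le_antisymm (hm.le_of_ge (f.monotone hm.prop) hm.prop) hm.prop⟩

theorem PosetConnected.apply_eq_of_isAntichain {Q : Type*} [PartialOrder Q]
    (hconn : PosetConnected P) (φ : P →o Q) {s : Set Q} (hs : IsAntichain (· ≤ ·) s)
    (hφ : ∀ p, φ p ∈ s) (a b : P) : φ a = φ b := by
  induction hconn a b with
  | refl => rfl
  | tail _ hbc hab =>
    rcases hbc with hbc | hcb
    · exact hab.trans (hs.eq (hφ _) (hφ _) (φ.monotone hbc))
    · exact hab.trans (hs.eq (hφ _) (hφ _) (φ.monotone hcb)).symm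

end Order

section Graphs

variable {P Q : Type*} [PartialOrder P] [PartialOrder Q]

def HitsAllGraphs (T : Set (P × Q)) : Prop :=
  ∀ φ : P →o Q, ∃ p, (p, φ p) ∈ T

def ContainsTransposedGraph (T : Set (P × Q)) : Prop :=
  ∃ ψ : Q →o P, ∀ q, (ψ q, q) ∈ T

theorem ContainsTransposedGraph.hitsAllGraphs [Finite P] {m : P} (hm : ∀ p, m ≤ p)
    {T : Set (P × Q)} (hT : ContainsTransposedGraph T) : HitsAllGraphs T := by
  obtain ⟨ψ, hψ⟩ := hT
  intro φ
  obtain ⟨p, hp : ψ (φ p) = p⟩ := (ψ.comp φ).exists_fixed_of_le_apply (hm _)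
  exact ⟨p, by simpa only [hp] using hψ (φ p)⟩

/-- A pair `(p, q')` with `q' < q` survives only if dominated by some `(p', q) ∈ T`, so that a
transposed graph inside `truncate T q` extends to `q`. -/
def truncate (T : Set (P × Q)) (q : Q) : Set (P × {x // x ≠ q}) :=
  {s | (s.1, s.2.1) ∈ T ∧ (s.2.1 < q → ∃ p', (p', q) ∈ T ∧ s.1 ≤ p')}

theorem HitsAllGraphs.truncate (hP : Rooted P) {T : Set (P × Q)} (hT : HitsAllGraphs T) (q : Q) :
    HitsAllGraphs (truncate T q) := by
  classical
  intro φ'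
  by_contra! hφ'
  -- Redirect to `q` everything above a point whose pair in `T` lies strictly below column `q`.
  let A : Set P := {a | (φ' a).1 < q ∧ (a, (φ' a).1) ∈ T}
  let φ : P → Q := fun p => if ∃ a ∈ A, a ≤ p then q else φ' p
  have hφ : Monotone φ := by
    intro x y hxy
    by_cases hx : ∃ a ∈ A, a ≤ x
    · have hy : ∃ a ∈ A, a ≤ y := hx.imp fun a ha => ⟨ha.1, ha.2.trans hxy⟩
      simp only [φ, if_pos hx, if_pos hy, le_rfl]
    by_cases hy : ∃ a ∈ A, a ≤ y
    · simp only [φ, if_neg hx, if_pos hy]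
      obtain ⟨a, ha, hay⟩ := hy
      rcases hP.le_total_of_le hxy hay with hxa | hax
      · exact (Subtype.coe_le_coe.2 (φ'.monotone hxa)).trans ha.1.le
      · exact absurd ⟨a, ha, hax⟩ hx
    · simp only [φ, if_neg hx, if_neg hy]
      exact φ'.monotone hxy
  obtain ⟨p, hp⟩ := hT ⟨φ, hφ⟩
  by_cases hpA : ∃ a ∈ A, a ≤ p
  · simp only [OrderHom.coe_mk, φ, if_pos hpA] at hp
    obtain ⟨a, ha, hap⟩ := hpA
    exact hφ' a ⟨ha.2, fun _ => ⟨p, hp, hap⟩⟩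
  · simp only [OrderHom.coe_mk, φ, if_neg hpA] at hp
    exact hφ' p ⟨hp, fun hlt => absurd ⟨p, ⟨hlt, hp⟩, le_rfl⟩ hpA⟩

theorem ContainsTransposedGraph.of_truncate [Finite Q] (hQ : Rooted Q) {T : Set (P × Q)}
    (hT : HitsAllGraphs T) {q : Q} (hq : IsMax q) (h : ContainsTransposedGraph (truncate T q)) :
    ContainsTransposedGraph T := by
  classical
  obtain ⟨ψ', hψ'⟩ := h
  obtain ⟨p, hpT, hp⟩ : ∃ p, (p, q) ∈ T ∧ ∀ x (hx : x < q), ψ' ⟨x, hx.ne⟩ ≤ p := by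
    by_cases hbelow : ∃ x, x < q
    · obtain ⟨x, hx⟩ := hbelow
      obtain ⟨b, hbq, hb⟩ := hQ.exists_isGreatest_lt hx
      obtain ⟨p, hpT, hbp⟩ := (hψ' ⟨b, hbq.ne⟩).2 hbq
      exact ⟨p, hpT, fun y hy => (ψ'.monotone (show _ ≤ _ from hb hy)).trans hbp⟩
    · push Not at hbelow
      obtain ⟨p, hp⟩ := hT (OrderHom.const P q)
      exact ⟨p, hp, fun x hx => absurd hx (hbelow x)⟩
  let ψ : Q → P := fun x => if hx : x = q then p else ψ' ⟨x, hx⟩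
  have hψ : Monotone ψ := by
    intro x y hxy
    by_cases hy : y = q
    · by_cases hx : x = q
      · simp only [ψ, dif_pos hx, dif_pos hy, le_rfl]
      · simp only [ψ, dif_neg hx, dif_pos hy]
        exact hp x (lt_of_le_of_ne (hy ▸ hxy) hx)
    · have hx : x ≠ q := by
        rintro rfl
        exact hy (hq.eq_of_le hxy).symm
      simp only [ψ, dif_neg hx, dif_neg hy]
      exact ψ'.monotone (show (⟨x, hx⟩ : {x // x ≠ q}) ≤ ⟨y, hy⟩ from hxy)
  refine ⟨⟨ψ, hψ⟩, fun x => ?_⟩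
  by_cases hx : x = q
  · subst hx
    simpa only [OrderHom.coe_mk, ψ, dif_pos] using hpT
  · simpa only [OrderHom.coe_mk, ψ, dif_neg hx] using (hψ' ⟨x, hx⟩).1

theorem HitsAllGraphs.containsTransposedGraph (hP : Rooted P) [Finite Q] (hQ : Rooted Q)
    {T : Set (P × Q)} (hT : HitsAllGraphs T) : ContainsTransposedGraph T := by
  induction hn : Nat.card Q using Nat.strong_induction_on generalizing Q with
  | _ n ih =>
  cases isEmpty_or_nonempty Q with
  | inl => exact ⟨⟨isEmptyElim, fun a => isEmptyElim a⟩, isEmptyElim⟩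
  | inr =>
    obtain ⟨q, -, hq⟩ := Set.finite_univ.exists_maximal (Set.univ_nonempty (α := Q))
    refine .of_truncate hQ hT (fun x hqx => hq trivial hqx) ?_
    exact ih _ (hn ▸ Finite.card_subtype_lt (not_not.mpr rfl)) (hQ.subtype _) (hT.truncate hP q) rfl

end Graphs

section Witness

variable {P Q : Type*} [PartialOrder P] [PartialOrder Q]

theorem exists_hitsAllGraphs_not_containsTransposedGraph (hconn : PosetConnected P)
    (hchain : ¬ IsChainPoset P) (hP : Rooted P) (hQ : ¬ Rooted Q) :
    ∃ T : Set (P × Q), HitsAllGraphs T ∧ ¬ ContainsTransposedGraph T := by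
  obtain ⟨p₁, p₂, hp₁₂, hp₂₁⟩ : ∃ p₁ p₂ : P, ¬ p₁ ≤ p₂ ∧ ¬ p₂ ≤ p₁ := by
    simpa [IsChainPoset] using hchain
  obtain ⟨q₁, q₂, q, hq₁₂, hq₂₁, hq₁, hq₂⟩ :
      ∃ q₁ q₂ q : Q, ¬ q₁ ≤ q₂ ∧ ¬ q₂ ≤ q₁ ∧ q₁ < q ∧ q₂ < q := by
    simpa [Rooted] using hQ
  have hanti : IsAntichain (· ≤ ·) ({q₁, q₂} : Set Q) :=
    Set.pairwise_pair.2 fun _ => ⟨hq₁₂, hq₂₁⟩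
  refine ⟨{s | s = (p₁, q₁) ∨ s = (p₂, q₂) ∨ s.2 ∉ ({q₁, q₂} : Set Q)}, fun φ => ?_, ?_⟩
  · by_contra! hφ
    simp only [Set.mem_ofPred_eq, not_or, not_not] at hφ
    have hconst := hconn.apply_eq_of_isAntichain φ hanti fun p => (hφ p).2.2
    have h₁ : φ p₁ = q₂ := ((hφ p₁).2.2).resolve_left fun h => (hφ p₁).1 (by rw [h])
    exact (hφ p₂).2.1 (by rw [hconst p₂ p₁, h₁])
  · rintro ⟨ψ, hψ⟩
    have hne : q₁ ≠ q₂ := fun h => hq₁₂ h.le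
    have h₁ : ψ q₁ = p₁ := by simpa [Prod.ext_iff, hne] using hψ q₁
    have h₂ : ψ q₂ = p₂ := by simpa [Prod.ext_iff, hne.symm] using hψ q₂
    rcases hP.le_total_of_le (h₁ ▸ ψ.monotone hq₁.le) (h₂ ▸ ψ.monotone hq₂.le) with h | h
    · exact hp₁₂ h
    · exact hp₂₁ h

end Witness

theorem Finsupp.sum_single_one_le_iff {σ : Type*} (s : Finset σ) (e : σ →₀ ℕ) :
    ∑ x ∈ s, Finsupp.single x 1 ≤ e ↔ s ⊆ e.support := by
  classical
  rw [← Finsupp.orderIsoMultiset.le_iff_le, Finsupp.coe_orderIsoMultiset,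
    Finsupp.toMultiset_sum_single, one_nsmul, Multiset.le_iff_subset s.nodup]
  simp [Finset.subset_iff, Multiset.subset_iff, Finsupp.mem_toMultiset]

section Ideals

variable {P Q K : Type*} [PartialOrder P] [PartialOrder Q] [Field K]

theorem mem_isoDual_iff (f : MvPolynomial (P × Q) K) :
    f ∈ isoDual P Q K ↔ ∀ e ∈ f.support, HitsAllGraphs (e.support : Set (P × Q)) := by
  have hφ (φ : P →o Q) : f ∈ Ideal.span {u | ∃ p, u = X (p, φ p)} ↔
      ∀ e ∈ f.support, ∃ p, (p, φ p) ∈ e.support := by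
    have hgen : {u : MvPolynomial (P × Q) K | ∃ p, u = X (p, φ p)} =
        X '' Set.range fun p => (p, φ p) := by
      ext; simp [eq_comm]
    simp [hgen, mem_ideal_span_X_image]
  simp only [isoDual, Ideal.mem_iInf, hφ, HitsAllGraphs, Finset.mem_coe]
  exact ⟨fun h e he φ => h φ e he, fun h φ e he => h e he φ⟩

theorem mem_isoTau_iff [Fintype Q] (f : MvPolynomial (P × Q) K) :
    f ∈ isoTau P Q K ↔ ∀ e ∈ f.support, ContainsTransposedGraph (e.support : Set (P × Q)) := by
  classical
  let G (ψ : Q →o P) : Finset (P × Q) := Finset.univ.image fun q => (ψ q, q)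
  have hG (ψ : Q →o P) (s : Finset (P × Q)) : G ψ ⊆ s ↔ ∀ q, (ψ q, q) ∈ s := by
    simp [G, Finset.image_subset_iff]
  have hprod (ψ : Q →o P) :
      ∏ q, X (ψ q, q) = monomial (∑ s ∈ G ψ, Finsupp.single s 1) (1 : K) := by
    rw [Finset.sum_image fun _ _ _ _ h => (Prod.ext_iff.1 h).2, monomial_sum_one]
    rfl
  have hgen : {u : MvPolynomial (P × Q) K | ∃ ψ : Q →o P, u = ∏ q, X (ψ q, q)} =
      (fun d => monomial d 1) '' Set.range fun ψ => ∑ s ∈ G ψ, Finsupp.single s 1 := by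
    rw [← Set.range_comp]
    ext
    simp only [hprod, Set.mem_ofPred_eq, Set.mem_range, Function.comp_apply, eq_comm]
  rw [isoTau, hgen, mem_ideal_span_monomial_image]
  simp only [Set.mem_range, exists_exists_eq_and, Finsupp.sum_single_one_le_iff, hG]
  rfl

theorem isoDual_eq_isoTau_iff [Finite P] [Fintype Q] :
    isoDual P Q K = isoTau P Q K ↔
      ∀ T : Set (P × Q), HitsAllGraphs T ↔ ContainsTransposedGraph T := by
  refine ⟨fun h T => ?_, fun h => Submodule.ext fun f => ?_⟩
  · classical
    let e : P × Q →₀ ℕ := Multiset.toFinsupp (Set.toFinite T).toFinset.val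
    have he : (e.support : Set (P × Q)) = T := by simp [e, Multiset.toFinsupp_support]
    have hsupp : (monomial e (1 : K)).support = {e} := by
      rw [support_monomial, if_neg one_ne_zero]
    have hmem := congrArg (monomial e (1 : K) ∈ ·) h
    simpa [mem_isoDual_iff, mem_isoTau_iff, hsupp, he] using hmem
  · rw [mem_isoDual_iff, mem_isoTau_iff]
    exact forall₂_congr fun e _ => h _

end Ideals

theorem stmt_5_general (P Q K : Type*) [PartialOrder P] [PartialOrder Q]
    [Fintype P] [Fintype Q] [Nonempty P] [Field K]
    (hconn : PosetConnected P) (hchain : ¬ IsChainPoset P) (hroot : Rooted P) :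
    isoDual P Q K = isoTau P Q K ↔ Rooted Q := by
  rw [isoDual_eq_isoTau_iff]
  refine ⟨fun h => ?_, fun hQ T => ⟨(·.containsTransposedGraph hroot hQ), ?_⟩⟩
  · by_contra hQ
    obtain ⟨T, hT, hT'⟩ := exists_hitsAllGraphs_not_containsTransposedGraph hconn hchain hroot hQ
    exact hT' ((h T).1 hT)
  · obtain ⟨m, hm⟩ := hroot.exists_bot hconn
    exact (·.hitsAllGraphs hm)

/-- If `P` is connected, not a chain, and rooted, then
`L(P,Q)^∨ = L(Q,P)^τ` iff `Q` is rooted. -/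
theorem stmt_5 (P Q K : Type*) [PartialOrder P] [PartialOrder Q]
    [Fintype P] [Fintype Q] [Nonempty P] [Nonempty Q] [Field K]
    (hconn : PosetConnected P) (hchain : ¬ IsChainPoset P) (hroot : Rooted P) :
    isoDual P Q K = isoTau P Q K ↔ Rooted Q :=
  stmt_5_general P Q K hconn hchain hroot
end

section
/- Let P be a finite nonempty poset and let [n] be the chain 1 < 2 < ⋯ < n (n ≥ 1). Then the duality condition holds for the pair (P,[n]): the Alexander dual of the generalized Hibi ideal L(P,[n]) equals the multichain ideal L([n],P)^τ, i.e., ⋂_{φ ∈ Hom(P,[n])} (x_{p,φ(p)} : p ∈ P) equals the ideal generated by the monomials ∏_{i ∈ [n]} x_{ψ(i),i} for ψ ∈ Hom([n],P). -/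
open MvPolynomial

/-- A monotone self-map of `Fin n` (`n ≥ 1`) has a fixed point. -/
lemma monotone_fin_fixed {n : ℕ} (hn : 1 ≤ n) {f : Fin n → Fin n} (hf : Monotone f) :
    ∃ i, f i = i := by
  classical
  set S : Finset (Fin n) := Finset.univ.filter (fun i => f i ≤ i) with hS
  have hne : S.Nonempty := by
    refine ⟨⟨n - 1, by omega⟩, ?_⟩
    simp only [hS, Finset.mem_filter, Finset.mem_univ, true_and]
    exact Fin.le_def.mpr (by have := (f ⟨n - 1, by omega⟩).isLt; simp; omega)
  set i₀ := S.min' hne with hi₀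
  have hmem : f i₀ ≤ i₀ := by
    have hm := S.min'_mem hne
    exact (Finset.mem_filter.mp hm).2
  refine ⟨i₀, le_antisymm hmem ?_⟩
  by_contra hlt
  push_neg at hlt
  have : f i₀ ∈ S := by
    simp only [hS, Finset.mem_filter, Finset.mem_univ, true_and]
    exact hf hmem
  exact absurd (S.min'_le _ this) (not_le.mpr hlt)

/-- Combinatorial key lemma: if a set `A ⊆ P × [n]` meets the graph of every isotone
`φ : P → [n]`, then it contains the "transposed graph" of some isotone `ψ : [n] → P`. -/
lemma key_combinatorial {P : Type*} [PartialOrder P] [Nonempty P] {n : ℕ} (hn : 1 ≤ n)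
    (A : Set (P × Fin n))
    (hA : ∀ φ : P →o Fin n, ∃ p, (p, φ p) ∈ A) :
    ∃ ψ : Fin n →o P, ∀ i, (ψ i, i) ∈ A := by
  classical
  by_contra hcon
  push_neg at hcon
  -- Good k p : there is a monotone chain hitting A on the first k levels, staying ≤ p
  set Good : ℕ → P → Prop := fun k p =>
    ∃ g : Fin n → P, Monotone g ∧ ∀ j : Fin n, (j : ℕ) < k → (g j, j) ∈ A ∧ g j ≤ p
    with hGood
  have good0 : ∀ p, Good 0 p := by
    intro p
    exact ⟨fun _ => p, monotone_const, fun j hj => absurd hj (by omega)⟩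
  set c : P → ℕ := fun p => Nat.findGreatest (fun k => Good k p) n with hc
  have hcle : ∀ p, c p ≤ n := fun p => Nat.findGreatest_le n
  have hcgood : ∀ p, Good (c p) p := fun p =>
    Nat.findGreatest_spec (P := fun k => Good k p) (Nat.zero_le n) (good0 p)
  have hclt : ∀ p, c p < n := by
    intro p
    rcases lt_or_eq_of_le (hcle p) with h | h
    · exact h
    · exfalso
      obtain ⟨g, hg, hgA⟩ := hcgood p
      rw [h] at hgA
      obtain ⟨i, hi⟩ := hcon ⟨g, hg⟩
      exact hi (hgA i i.isLt).1
  have hcmono : ∀ p q : P, p ≤ q → c p ≤ c q := by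
    intro p q hpq
    obtain ⟨g, hg, hgA⟩ := hcgood p
    exact Nat.le_findGreatest (hcle p)
      ⟨g, hg, fun j hj => ⟨(hgA j hj).1, (hgA j hj).2.trans hpq⟩⟩
  set φ : P →o Fin n := ⟨fun p => ⟨c p, hclt p⟩, fun p q hpq => Fin.mk_le_mk.mpr (hcmono p q hpq)⟩
    with hφ
  obtain ⟨p, hp⟩ := hA φ
  -- extend the chain for p by p itself at level c p
  obtain ⟨g, hg, hgA⟩ := hcgood p
  have hool : Good (c p + 1) p := by
    refine ⟨fun j => if (j : ℕ) < c p then g j else p, ?_, ?_⟩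
    · intro j₁ j₂ hj
      by_cases h1 : (j₁ : ℕ) < c p <;> by_cases h2 : (j₂ : ℕ) < c p
      · simpa [h1, h2] using hg hj
      · simpa [h1, h2] using (hgA j₁ h1).2
      · exact absurd ((Fin.le_def.mp hj).trans_lt h2) h1
      · simp [h1, h2]
    · intro j hj
      by_cases h1 : (j : ℕ) < c p
      · simpa [h1] using ⟨(hgA j h1).1, (hgA j h1).2⟩
      · have hjv : (j : ℕ) = c p := by omega
        have hje : j = ⟨c p, hclt p⟩ := Fin.ext hjv
        simp only [h1, if_false]
        exact ⟨by rw [hje]; exact hp, le_refl p⟩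
  have := Nat.le_findGreatest (P := fun k => Good k p) (show c p + 1 ≤ n from hclt p) hool
  have h2 : Nat.findGreatest (fun k => Good k p) n = c p := rfl
  omega

/-- For any finite nonempty poset `P` and the chain `[n]` (`n ≥ 1`),
the Alexander dual of the generalized Hibi ideal `L(P,[n])` equals the multichain ideal
`L([n],P)^τ`. -/
theorem stmt_10 (P K : Type*) [PartialOrder P] [Fintype P] [Nonempty P] [Field K]
    (n : ℕ) (hn : 1 ≤ n) :
    isoDual P (Fin n) K = isoTau P (Fin n) K := by
  classical
  apply le_antisymm
  · -- isoDual ≤ isoTau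
    intro f hf
    have hf' : ∀ φ : P →o Fin n, ∀ m ∈ f.support, ∃ p : P, m (p, φ p) ≠ 0 := by
      intro φ m hm
      have h2 := (Ideal.mem_iInf.mp hf) φ
      have h1 : ({u | ∃ p : P, u = X (p, φ p)} : Set (MvPolynomial (P × Fin n) K)) =
          X '' (Set.range fun p : P => (p, φ p)) := by
        ext u
        constructor
        · rintro ⟨p, rfl⟩; exact ⟨(p, φ p), ⟨p, rfl⟩, rfl⟩
        · rintro ⟨i, ⟨p, rfl⟩, rfl⟩; exact ⟨p, rfl⟩
      rw [h1, mem_ideal_span_X_image] at h2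
      obtain ⟨i, ⟨p, hp⟩, hi⟩ := h2 m hm
      exact ⟨p, by simp only [] at hp; rw [hp]; exact hi⟩
    rw [← f.support_sum_monomial_coeff]
    apply Ideal.sum_mem
    intro m hm
    obtain ⟨ψ, hψ⟩ := key_combinatorial hn {a | m a ≠ 0} (fun φ => hf' φ m hm)
    have hdvd : (∏ i : Fin n, X (ψ i, i) : MvPolynomial (P × Fin n) K) ∣
        monomial m (coeff m f) := by
      have he : (∏ i : Fin n, X (ψ i, i) : MvPolynomial (P × Fin n) K)
          = monomial (∑ i : Fin n, Finsupp.single ((ψ i, i) : P × Fin n) 1) 1 := by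
        rw [monomial_sum_one]
        rfl
      rw [he, monomial_dvd_monomial]
      refine ⟨Or.inr ?_, one_dvd _⟩
      rw [Finsupp.le_def]
      rintro ⟨p, j⟩
      rw [Finsupp.finset_sum_apply]
      have hsum : ∑ i : Fin n, (Finsupp.single ((ψ i, i) : P × Fin n) 1) (p, j)
          = if ψ j = p then 1 else 0 := by
        rw [Finset.sum_eq_single j]
        · rw [Finsupp.single_apply]
          by_cases h : ψ j = p <;> simp [h, Prod.ext_iff]
        · intro i _ hij
          rw [Finsupp.single_apply, if_neg]
          simp [Prod.ext_iff]
          intro _ h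
          exact absurd h hij
        · simp
      rw [hsum]
      by_cases h : ψ j = p
      · have hthis := hψ j
        rw [h] at hthis
        simp only [Set.mem_setOf_eq] at hthis
        simp only [if_pos h]
        omega
      · simp [h]
    obtain ⟨q, hq⟩ := hdvd
    rw [hq]
    exact Ideal.mul_mem_right _ _ (Ideal.subset_span ⟨ψ, rfl⟩)
  · -- isoTau ≤ isoDual
    rw [isoTau, Ideal.span_le]
    rintro u ⟨ψ, rfl⟩
    rw [SetLike.mem_coe, isoDual]
    rw [Ideal.mem_iInf]
    intro φ
    obtain ⟨i₀, hi₀⟩ := monotone_fin_fixed hn (f := φ ∘ ψ) (φ.monotone.comp ψ.monotone)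
    rw [← Finset.mul_prod_erase Finset.univ _ (Finset.mem_univ i₀)]
    apply Ideal.mul_mem_right
    apply Ideal.subset_span
    exact ⟨ψ i₀, by rw [show φ (ψ i₀) = i₀ from hi₀]⟩
end

section
/- Let P be a finite nonempty poset having a unique minimal element or a unique maximal element, and let Q be a finite nonempty poset. Then for every isotone map φ: P → Q and every isotone map ψ: Q → P there exists p ∈ P with ψ(φ(p)) = p; consequently, L(P,Q) ⊆ 𝔭_ψ for every ψ ∈ Hom(Q,P). -/
open MvPolynomial

lemma fix_aux_up {P : Type*} [PartialOrder P] [Finite P] {f : P → P}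
    (hf : Monotone f) {a : P} (ha : a ≤ f a) : ∃ p, f p = p := by
  have key : ∀ n, f^[n] a ≤ f (f^[n] a) := by
    intro n
    induction n with
    | zero => simpa using ha
    | succ n ih => rw [Function.iterate_succ_apply']; exact hf ih
  have hmono : Monotone (fun n => f^[n] a) :=
    monotone_nat_of_le_succ (fun n => by
      rw [Function.iterate_succ_apply']; exact key n)
  have main : ∀ i j : ℕ, i < j → f^[i] a = f^[j] a → ∃ p, f p = p := by
    intro i j hlt heq
    refine ⟨f^[i] a, ?_⟩
    have h1 : f (f^[i] a) ≤ f^[j] a := by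
      rw [show f (f^[i] a) = f^[i+1] a from (Function.iterate_succ_apply' f i a).symm]
      exact hmono (Nat.succ_le_of_lt hlt)
    rw [← heq] at h1
    exact le_antisymm h1 (key i)
  obtain ⟨i, j, hij, hconst⟩ := Finite.exists_ne_map_eq_of_infinite (fun n => f^[n] a)
  rcases hij.lt_or_gt with h | h
  · exact main i j h hconst
  · exact main j i h hconst.symm

lemma fix_aux_down {P : Type*} [PartialOrder P] [Finite P] {f : P → P}
    (hf : Monotone f) {a : P} (ha : f a ≤ a) : ∃ p, f p = p := by
  have key : ∀ n, f (f^[n] a) ≤ f^[n] a := by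
    intro n
    induction n with
    | zero => simpa using ha
    | succ n ih => rw [Function.iterate_succ_apply']; exact hf ih
  have hmono : Antitone (fun n => f^[n] a) :=
    antitone_nat_of_succ_le (fun n => by
      rw [Function.iterate_succ_apply']; exact key n)
  have main : ∀ i j : ℕ, i < j → f^[i] a = f^[j] a → ∃ p, f p = p := by
    intro i j hlt heq
    refine ⟨f^[i] a, ?_⟩
    have h1 : f^[j] a ≤ f (f^[i] a) := by
      rw [show f (f^[i] a) = f^[i+1] a from (Function.iterate_succ_apply' f i a).symm]
      exact hmono (Nat.succ_le_of_lt hlt)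
    rw [← heq] at h1
    exact le_antisymm (key i) h1
  obtain ⟨i, j, hij, hconst⟩ := Finite.exists_ne_map_eq_of_infinite (fun n => f^[n] a)
  rcases hij.lt_or_gt with h | h
  · exact main i j h hconst
  · exact main j i h hconst.symm

/-- If `P` has a unique minimal or a unique maximal element, then for all
isotone `φ : P → Q` and `ψ : Q → P` the composition `ψ ∘ φ` has a fixpoint; consequently
`L(P,Q) ⊆ 𝔭_ψ` for every `ψ ∈ Hom(Q,P)`. -/
theorem stmt_12 (P Q K : Type*) [PartialOrder P] [PartialOrder Q]
    [Fintype P] [Fintype Q] [Nonempty P] [Nonempty Q] [Field K]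
    (hP : (∃! m : P, ∀ x : P, ¬ x < m) ∨ (∃! m : P, ∀ x : P, ¬ m < x)) :
    (∀ (φ : P →o Q) (ψ : Q →o P), ∃ p : P, ψ (φ p) = p) ∧
    (∀ ψ : Q →o P, isoL P Q K ≤ pPsi P Q K ψ) := by
  have hfix : ∀ (φ : P →o Q) (ψ : Q →o P), ∃ p : P, ψ (φ p) = p := by
    intro φ ψ
    have hf : Monotone (fun p => ψ (φ p)) := fun a b h => ψ.monotone (φ.monotone h)
    rcases hP with ⟨m, _, hmu⟩ | ⟨m, _, hmu⟩
    · have hbot : ∀ x, m ≤ x := by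
        intro x
        obtain ⟨b, hbx, hbmin⟩ :=
          (Finite.to_wellFoundedLT (α := P)).wf.has_min {y | y ≤ x} ⟨x, le_rfl⟩
        have hb : b = m := hmu b (fun z hz => hbmin z (hz.le.trans hbx) hz)
        exact hb ▸ hbx
      exact fix_aux_up hf (hbot (ψ (φ m)))
    · have htop : ∀ x, x ≤ m := by
        intro x
        obtain ⟨b, hbx, hbmax⟩ :=
          (Finite.to_wellFoundedGT (α := P)).wf.has_min {y | x ≤ y} ⟨x, le_rfl⟩
        have hb : b = m := hmu b (fun z hz => hbmax z (hbx.trans hz.le) hz)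
        exact hb ▸ hbx
      exact fix_aux_down hf (htop (ψ (φ m)))
  refine ⟨hfix, ?_⟩
  intro ψ
  rw [isoL, Ideal.span_le]
  rintro u ⟨φ, rfl⟩
  obtain ⟨p, hp⟩ := hfix φ ψ
  have hx : (X (p, φ p) : MvPolynomial (P × Q) K) ∈ pPsi P Q K ψ :=
    Ideal.subset_span ⟨φ p, by rw [hp]⟩
  have hdvd : (X (p, φ p) : MvPolynomial (P × Q) K) ∣ ∏ p' : P, X (p', φ p') :=
    Finset.dvd_prod_of_mem _ (Finset.mem_univ p)
  obtain ⟨c, hc⟩ := hdvd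
  rw [SetLike.mem_coe, hc, mul_comm]
  exact Ideal.mul_mem_left _ _ hx
end

section
/- Let P be a finite nonempty poset. If P is connected and co-rooted, then P has a unique maximal element. -/
open MvPolynomial

/-- A connected co-rooted finite nonempty poset has a unique maximal
element. -/
theorem stmt_14 (P : Type*) [PartialOrder P] [Fintype P] [Nonempty P]
    (hconn : PosetConnected P) (hcoroot : CoRooted P) :
    ∃! m : P, ∀ x : P, ¬ m < x := by
  unfold PosetConnected at hconn
  unfold CoRooted at hcoroot
  have key : ∀ a : P, ∃! m : P, a ≤ m ∧ ∀ x, ¬ m < x := by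
    intro a
    obtain ⟨m, ham, hm⟩ := Finite.exists_le_maximal (le_refl a)
    have hmax : ∀ x, ¬ m < x := fun x hx =>
      hx.ne' (le_antisymm (hm.2 (ham.trans hx.le) hx.le) hx.le)
    refine ⟨m, ⟨ham, hmax⟩, ?_⟩
    rintro m' ⟨ham', hm'⟩
    by_cases h1 : m' ≤ m
    · rcases h1.lt_or_eq with h | h
      · exact absurd h (hm' m)
      · exact h
    by_cases h2 : m ≤ m'
    · rcases h2.lt_or_eq with h | h
      · exact absurd h (hmax m')
      · exact h.symm
    exfalso
    have ha1 : a < m' := lt_of_le_of_ne ham' (by rintro rfl; exact h1 ham)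
    have ha2 : a < m := lt_of_le_of_ne ham (by rintro rfl; exact h2 ham')
    exact hcoroot m' m a h1 h2 ⟨ha1, ha2⟩
  set a₀ := Classical.arbitrary P with ha₀
  obtain ⟨m, hm, hmu⟩ := key a₀
  refine ⟨m, hm.2, fun y hy => ?_⟩
  have inv : ∀ b : P, Relation.ReflTransGen (fun x y : P => x ≤ y ∨ y ≤ x) a₀ b → b ≤ m := by
    intro b hb
    induction hb with
    | refl => exact hm.1
    | @tail b2 c hbc hrel ih =>
      
      rcases hrel with h | h
      · obtain ⟨w, ⟨hcw, hwmax⟩, _⟩ := key c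
        obtain ⟨w', _, hwu'⟩ := key b2
        have h1 : w = w' := hwu' w ⟨h.trans hcw, hwmax⟩
        have h2 : m = w' := hwu' m ⟨ih, hm.2⟩
        exact (h1.trans h2.symm) ▸ hcw
      · exact h.trans ih
  have hym : y ≤ m := inv y (hconn a₀ y)
  rcases hym.lt_or_eq with h | h
  · exact absurd h (hy m)
  · exact h
end

section
/- Let P be a connected finite nonempty poset and let Q be the direct sum of chains Q₁, Q₂, …, Qₙ. Then L(P,Q) = L(P,Q₁) + ⋯ + L(P,Qₙ) as ideals of S = K[x_{pq} : p ∈ P, q ∈ Q], where L(P,Qᵢ) denotes the ideal of S generated by the monomials ∏_{p ∈ P} x_{p,φ(p)} over isotone maps φ: P → Q whose image lies in Qᵢ; and consequently L(P,Q)^∨ = L(P,Q₁)^∨ · L(P,Q₂)^∨ ⋯ L(P,Qₙ)^∨, the Alexander dual of the sum being the product of the Alexander duals. -/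
open MvPolynomial

/-! An isotone map from a connected poset into a direct sum of posets lands in a single summand,
so `Hom(P,Q)` is the disjoint union of the `Hom(P,Qᵢ)`. This splits the generators of `L(P,Q)`
and the components of the intersection `L(P,Q)^∨`. The duals `L(P,Qᵢ)^∨` are monomial ideals in
pairwise disjoint sets of variables, and for such ideals the intersection is the product: a
monomial in all of them factors into its parts in the variables of each summand, and the part
in the variables of `Qᵢ` already lies in `L(P,Qᵢ)^∨`. -/

lemma PosetConnected.apply_eq_apply {P α : Type*} [PartialOrder P] (hP : PosetConnected P)
    {g : P → α} (hg : ∀ p p' : P, p ≤ p' → g p = g p') (a b : P) : g a = g b := by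
  induction hP a b with
  | refl => rfl
  | tail _ hxy ih =>
    rcases hxy with hxy | hxy
    · exact ih.trans (hg _ _ hxy)
    · exact ih.trans (hg _ _ hxy).symm

lemma PosetConnected.exists_forall_comp_eq {P Q ι : Type*} [PartialOrder P] [PartialOrder Q]
    [Nonempty P] (hP : PosetConnected P) {c : Q → ι} (hc : ∀ q q' : Q, q ≤ q' → c q = c q')
    (φ : P →o Q) : ∃ i, ∀ p, c (φ p) = i :=
  ⟨c (φ (Classical.arbitrary P)), fun p =>
    hP.apply_eq_apply (fun _ _ h => hc _ _ (φ.monotone h)) p _⟩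

namespace MvPolynomial

variable {σ R ι : Type*} [CommSemiring R]

lemma sum_filter_eq_self [Fintype ι] [DecidableEq ι] (c : σ → ι) (m : σ →₀ ℕ) :
    ∑ i, m.filter (c · = i) = m := by
  ext v
  simp [Finsupp.finsetSum_apply, Finsupp.filter_apply]

lemma monomial_filter_mem_span_X_image {s : Set σ} {f : MvPolynomial σ R}
    (hf : f ∈ Ideal.span (X '' s)) {m : σ →₀ ℕ} (hm : m ∈ f.support)
    (t : σ → Prop) [DecidablePred t] (hst : ∀ v ∈ s, t v) :
    monomial (m.filter t) (1 : R) ∈ Ideal.span (X '' s) := by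
  rw [mem_ideal_span_X_image] at hf ⊢
  intro m' hm'
  obtain rfl := Finset.mem_singleton.1 (support_monomial_subset hm')
  obtain ⟨v, hvs, hv⟩ := hf m hm
  exact ⟨v, hvs, by rwa [Finsupp.filter_apply_pos _ _ (hst v hvs)]⟩

theorem iInf_eq_prod_of_monomial_filter_mem [Fintype ι] [DecidableEq ι] (c : σ → ι)
    (I : ι → Ideal (MvPolynomial σ R))
    (hI : ∀ i, ∀ f ∈ I i, ∀ m ∈ f.support, monomial (m.filter (c · = i)) (1 : R) ∈ I i) :
    ⨅ i, I i = ∏ i, I i := by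
  refine le_antisymm (fun f hf => ?_) (Finset.inf_univ_eq_iInf I ▸ Ideal.prod_le_inf)
  rw [f.as_sum]
  refine Ideal.sum_mem _ fun m hm => ?_
  have hsplit : monomial m (coeff m f) =
      C (coeff m f) * ∏ i, monomial (m.filter (c · = i)) (1 : R) := by
    rw [← monomial_sum_one, sum_filter_eq_self, C_mul_monomial, mul_one]
  rw [hsplit]
  exact Ideal.mul_mem_left _ _ <| Ideal.prod_mem_prod fun i _ =>
    hI i f (Submodule.mem_iInf _ |>.1 hf i) m hm

end MvPolynomial

section DirectSum

variable {P Q K ι : Type*} [PartialOrder P] [PartialOrder Q] [Field K]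

lemma isoL_eq_sum_components [Fintype P] [Nonempty P] [Fintype ι] (hP : PosetConnected P)
    (c : Q → ι) (hc : ∀ q q' : Q, q ≤ q' → c q = c q') :
    isoL P Q K = ∑ i, Ideal.span
      { u | ∃ φ : P →o Q, (∀ p : P, c (φ p) = i) ∧ u = ∏ p : P, X (p, φ p) } := by
  rw [Ideal.sum_eq_sup, Finset.sup_univ_eq_iSup, ← Ideal.span_iUnion, isoL]
  congr 1
  ext u
  simp only [Set.mem_ofPred_eq, Set.mem_iUnion]
  constructor
  · rintro ⟨φ, rfl⟩
    obtain ⟨i, hi⟩ := hP.exists_forall_comp_eq hc φ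
    exact ⟨i, φ, hi, rfl⟩
  · rintro ⟨_, φ, _, rfl⟩
    exact ⟨φ, rfl⟩

lemma span_X_graph_eq (φ : P →o Q) :
    Ideal.span { u : MvPolynomial (P × Q) K | ∃ p : P, u = X (p, φ p) } =
      Ideal.span (X '' Set.range fun p => (p, φ p)) := by
  congr 1
  ext u
  simp [eq_comm]

lemma isoDual_eq_iInf_components [Nonempty P] (hP : PosetConnected P) (c : Q → ι)
    (hc : ∀ q q' : Q, q ≤ q' → c q = c q') :
    isoDual P Q K = ⨅ i, ⨅ φ : { φ : P →o Q // ∀ p : P, c (φ p) = i },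
      Ideal.span { u | ∃ p : P, u = X (p, (φ : P →o Q) p) } := by
  refine le_antisymm (le_iInf fun i => le_iInf fun φ => iInf_le _ (φ : P →o Q))
    (le_iInf fun φ => ?_)
  obtain ⟨i, hi⟩ := hP.exists_forall_comp_eq hc φ
  exact (iInf_le _ i).trans (iInf_le_of_le ⟨φ, hi⟩ le_rfl)

lemma monomial_filter_mem_iInf_span_X_graph [DecidableEq ι] (c : Q → ι) (i : ι)
    {f : MvPolynomial (P × Q) K}
    (hf : f ∈ ⨅ φ : { φ : P →o Q // ∀ p : P, c (φ p) = i },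
      Ideal.span { u | ∃ p : P, u = X (p, (φ : P →o Q) p) })
    {m : P × Q →₀ ℕ} (hm : m ∈ f.support) :
    monomial (m.filter (fun v => c v.2 = i)) (1 : K) ∈
      ⨅ φ : { φ : P →o Q // ∀ p : P, c (φ p) = i },
        Ideal.span { u | ∃ p : P, u = X (p, (φ : P →o Q) p) } := by
  refine Submodule.mem_iInf _ |>.2 fun φ => ?_
  have hfφ := Submodule.mem_iInf _ |>.1 hf φ
  rw [span_X_graph_eq] at hfφ ⊢
  exact monomial_filter_mem_span_X_image hfφ hm _ (by rintro _ ⟨p, rfl⟩; exact φ.2 p)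

end DirectSum

theorem stmt_18_general (P Q K : Type*) [PartialOrder P] [PartialOrder Q]
    [Fintype P] [Nonempty P] [Field K]
    (hconn : PosetConnected P)
    (n : ℕ) (c : Q → Fin n)
    (hcomp : ∀ q q' : Q, q ≤ q' → c q = c q') :
    (isoL P Q K =
      ∑ i : Fin n, Ideal.span
        { u | ∃ φ : P →o Q, (∀ p : P, c (φ p) = i) ∧ u = ∏ p : P, X (p, φ p) }) ∧
    (isoDual P Q K =
      ∏ i : Fin n, ⨅ φ : { φ : P →o Q // ∀ p : P, c (φ p) = i },
        Ideal.span { u | ∃ p : P, u = X (p, (φ : P →o Q) p) }) := by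
  refine ⟨isoL_eq_sum_components hconn c hcomp, ?_⟩
  rw [isoDual_eq_iInf_components hconn c hcomp]
  exact iInf_eq_prod_of_monomial_filter_mem (fun v : P × Q => c v.2) _
    fun i _ hf _ hm => monomial_filter_mem_iInf_span_X_graph c i hf hm

/-- Let `P` be connected and let `Q` be the direct sum of chains
`Q₁, …, Qₙ`, encoded by a component map `c : Q → Fin n` with comparable elements in the
same component and each component totally ordered. Then `L(P,Q) = L(P,Q₁) + ⋯ + L(P,Qₙ)`
and `L(P,Q)^∨ = L(P,Q₁)^∨ ⋯ L(P,Qₙ)^∨`. -/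
theorem stmt_18 (P Q K : Type*) [PartialOrder P] [PartialOrder Q]
    [Fintype P] [Fintype Q] [Nonempty P] [Nonempty Q] [Field K]
    (hconn : PosetConnected P)
    (n : ℕ) (c : Q → Fin n)
    (hcomp : ∀ q q' : Q, q ≤ q' → c q = c q')
    (hchain : ∀ q q' : Q, c q = c q' → q ≤ q' ∨ q' ≤ q) :
    (isoL P Q K =
      ∑ i : Fin n, Ideal.span
        { u | ∃ φ : P →o Q, (∀ p : P, c (φ p) = i) ∧ u = ∏ p : P, X (p, φ p) }) ∧
    (isoDual P Q K =
      ∏ i : Fin n, ⨅ φ : { φ : P →o Q // ∀ p : P, c (φ p) = i },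
        Ideal.span { u | ∃ p : P, u = X (p, (φ : P →o Q) p) }) :=
  stmt_18_general P Q K hconn n c hcomp
end
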